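/- With T* as above, for all mean vectors μ and μ' with T*(μ'), T*(μ) finite and positive, ln T*(μ') - ln T*(μ) ≤ √(2 T*(μ')/σ²)·‖μ - μ'‖_∞. -/

import Mathlib

/-- `Tinv K σ2 Alt μ = (T*(μ))⁻¹ = sup_{w ∈ Δ_K} inf_{λ ∈ Alt μ} Σ_i w_i (μ_i - λ_i)²/(2σ²)`. -/
noncomputable def Tinv (K : ℕ) (σ2 : ℝ) (Alt : (Fin K → ℝ) → Set (Fin K → ℝ))
    (μ : Fin K → ℝ) : ℝ :=
  sSup {x | ∃ w ∈ stdSimplex ℝ (Fin K), x =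
    sInf {y | ∃ l ∈ Alt μ, y = ∑ i, w i * (μ i - l i) ^ 2 / (2 * σ2)}}

/-! For fixed weights `w`, `λ ↦ √(∑ i, w i (ν i - λ i)² / (2σ²))` is a weighted `ℓ²` seminorm
of `ν - λ`, dominated by `‖ν - λ‖_∞ / √(2σ²)`. If `Alt μ = Alt μ'`, the triangle inequality
moves the infimum over alternatives from `μ'` to `μ` at a cost of `‖μ - μ'‖_∞ / √(2σ²)`;
otherwise `μ'` is itself an alternative of `μ`, which bounds the infimum by that cost directly.
Taking the supremum over `w` gives `√(T*(μ)⁻¹) ≤ √(T*(μ')⁻¹) + ‖μ - μ'‖_∞ / √(2σ²)`, and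
`ln x ≤ x - 1` at `x = √(T*(μ)⁻¹ / T*(μ')⁻¹)` turns this into the logarithmic bound. -/

open Finset

section WeightedSums

variable {ι : Type*} [Fintype ι] {σ2 : ℝ} {w : ι → ℝ}

lemma sum_mul_sq_le_norm_sq (hw : w ∈ stdSimplex ℝ ι) (x : ι → ℝ) :
    ∑ i, w i * x i ^ 2 ≤ ‖x‖ ^ 2 :=
  calc ∑ i, w i * x i ^ 2 ≤ ∑ i, w i * ‖x‖ ^ 2 := by
        refine sum_le_sum fun i _ => mul_le_mul_of_nonneg_left ?_ (hw.1 i)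
        rw [← sq_abs, ← Real.norm_eq_abs]
        gcongr
        exact norm_le_pi_norm x i
    _ = ‖x‖ ^ 2 := by rw [← sum_mul, hw.2, one_mul]

lemma sqrt_sum_mul_sq_add_le (hw : ∀ i, 0 ≤ w i) (x y : ι → ℝ) :
    √(∑ i, w i * (x i + y i) ^ 2) ≤ √(∑ i, w i * x i ^ 2) + √(∑ i, w i * y i ^ 2) := by
  have sqrt_eq_norm (z : ι → ℝ) :
      √(∑ i, w i * z i ^ 2) = ‖(WithLp.toLp 2 fun i => √(w i) * z i : EuclideanSpace ℝ ι)‖ := by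
    rw [EuclideanSpace.norm_eq]
    congr 1
    refine sum_congr rfl fun i _ => ?_
    rw [Real.norm_eq_abs, sq_abs, mul_pow, Real.sq_sqrt (hw i)]
  rw [sqrt_eq_norm, sqrt_eq_norm, sqrt_eq_norm]
  refine le_of_eq_of_le ?_ (norm_add_le _ _)
  rw [← WithLp.toLp_add]
  congr 2
  funext i
  simp [mul_add]

/-- `∑ i, w i * KL(N(a i, σ²), N(b i, σ²))` for `x = a - b`. -/
noncomputable def weightedKL (σ2 : ℝ) (w x : ι → ℝ) : ℝ :=
  ∑ i, w i * x i ^ 2 / (2 * σ2)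

lemma weightedKL_eq_div (x : ι → ℝ) :
    weightedKL σ2 w x = (∑ i, w i * x i ^ 2) / (2 * σ2) :=
  (sum_div _ _ _).symm

lemma weightedKL_nonneg (hσ : 0 ≤ σ2) (hw : ∀ i, 0 ≤ w i) (x : ι → ℝ) :
    0 ≤ weightedKL σ2 w x :=
  sum_nonneg fun i _ => by have := hw i; positivity

lemma weightedKL_le_norm_sq_div (hσ : 0 ≤ σ2) (hw : w ∈ stdSimplex ℝ ι) (x : ι → ℝ) :
    weightedKL σ2 w x ≤ ‖x‖ ^ 2 / (2 * σ2) := by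
  rw [weightedKL_eq_div]
  gcongr
  exact sum_mul_sq_le_norm_sq hw x

lemma sqrt_weightedKL_le (hσ : 0 ≤ σ2) (hw : w ∈ stdSimplex ℝ ι) (x : ι → ℝ) :
    √(weightedKL σ2 w x) ≤ ‖x‖ / √(2 * σ2) := by
  rw [← Real.sqrt_sq (norm_nonneg x), ← Real.sqrt_div' _ (by positivity)]
  exact Real.sqrt_le_sqrt (weightedKL_le_norm_sq_div hσ hw x)

lemma sqrt_weightedKL_add_le (hw : ∀ i, 0 ≤ w i) (x y : ι → ℝ) :
    √(weightedKL σ2 w (x + y)) ≤ √(weightedKL σ2 w x) + √(weightedKL σ2 w y) := by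
  have hnonneg (z : ι → ℝ) : 0 ≤ ∑ i, w i * z i ^ 2 :=
    sum_nonneg fun i _ => mul_nonneg (hw i) (sq_nonneg _)
  simp only [weightedKL_eq_div, Real.sqrt_div (hnonneg _), ← add_div]
  gcongr
  exact sqrt_sum_mul_sq_add_le hw x y

end WeightedSums

lemma sqrt_csInf_image_le_sqrt_csInf_image_add {ι : Type*} {s : Set ι} (hs : s.Nonempty)
    {f g : ι → ℝ} (hf : ∀ i ∈ s, 0 ≤ f i) (hg : ∀ i ∈ s, 0 ≤ g i) {d : ℝ}
    (h : ∀ i ∈ s, √(f i) ≤ √(g i) + d) :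
    √(sInf (f '' s)) ≤ √(sInf (g '' s)) + d := by
  have hsqrt_mono : Monotone (√· : ℝ → ℝ) := fun _ _ => Real.sqrt_le_sqrt
  have hshift_mono : Monotone fun x : ℝ => √x + d := fun _ _ hxy => by
    simpa using hsqrt_mono hxy
  calc √(sInf (f '' s)) = sInf ((√·) '' (f '' s)) :=
        hsqrt_mono.map_csInf_of_continuousAt Real.continuous_sqrt.continuousAt (hs.image f)
          ⟨0, Set.forall_mem_image.2 hf⟩
    _ ≤ sInf ((fun x => √x + d) '' (g '' s)) := by
        refine le_csInf ((hs.image g).image _) ?_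
        rintro _ ⟨_, ⟨i, hi, rfl⟩, rfl⟩
        refine (csInf_le ?_ (Set.mem_image_of_mem _ (Set.mem_image_of_mem f hi))).trans (h i hi)
        exact ⟨0, by rintro _ ⟨x, _, rfl⟩; positivity⟩
    _ = √(sInf (g '' s)) + d :=
        (hshift_mono.map_csInf_of_continuousAt (by fun_prop) (hs.image g)
          ⟨0, Set.forall_mem_image.2 hg⟩).symm

section Tinv

variable {K : ℕ} {σ2 : ℝ} {Alt : (Fin K → ℝ) → Set (Fin K → ℝ)} {ν w : Fin K → ℝ}

noncomputable def infAltKL (σ2 : ℝ) (Alt : (Fin K → ℝ) → Set (Fin K → ℝ)) (ν w : Fin K → ℝ) :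
    ℝ :=
  sInf ((fun l => weightedKL σ2 w (ν - l)) '' Alt ν)

lemma Tinv_eq_sSup_infAltKL :
    Tinv K σ2 Alt ν = sSup (infAltKL σ2 Alt ν '' stdSimplex ℝ (Fin K)) := by
  simp only [Tinv, infAltKL, weightedKL, Set.image, Pi.sub_apply, eq_comm]

lemma infAltKL_le_weightedKL (hσ : 0 ≤ σ2) (hw : w ∈ stdSimplex ℝ (Fin K)) {l : Fin K → ℝ}
    (hl : l ∈ Alt ν) : infAltKL σ2 Alt ν w ≤ weightedKL σ2 w (ν - l) :=
  csInf_le ⟨0, Set.forall_mem_image.2 fun _ _ => weightedKL_nonneg hσ hw.1 _⟩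
    (Set.mem_image_of_mem _ hl)

lemma infAltKL_le_Tinv (hσ : 0 ≤ σ2) (hAlt : (Alt ν).Nonempty) (hw : w ∈ stdSimplex ℝ (Fin K)) :
    infAltKL σ2 Alt ν w ≤ Tinv K σ2 Alt ν := by
  obtain ⟨l, hl⟩ := hAlt
  rw [Tinv_eq_sSup_infAltKL]
  refine le_csSup ⟨‖ν - l‖ ^ 2 / (2 * σ2), ?_⟩ (Set.mem_image_of_mem _ hw)
  rintro _ ⟨w', hw', rfl⟩
  exact (infAltKL_le_weightedKL hσ hw' hl).trans (weightedKL_le_norm_sq_div hσ hw' _)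

lemma sqrt_infAltKL_le_of_alt_eq (hσ : 0 ≤ σ2) (hw : w ∈ stdSimplex ℝ (Fin K))
    {μ μ' : Fin K → ℝ} (hAlt : Alt μ = Alt μ') (hne : (Alt μ').Nonempty) :
    √(infAltKL σ2 Alt μ w) ≤ √(infAltKL σ2 Alt μ' w) + ‖μ - μ'‖ / √(2 * σ2) := by
  unfold infAltKL
  rw [hAlt]
  refine sqrt_csInf_image_le_sqrt_csInf_image_add hne
    (fun _ _ => weightedKL_nonneg hσ hw.1 _) (fun _ _ => weightedKL_nonneg hσ hw.1 _) ?_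
  intro l _
  calc √(weightedKL σ2 w (μ - l)) = √(weightedKL σ2 w ((μ' - l) + (μ - μ'))) := by
        rw [sub_add_sub_cancel']
    _ ≤ √(weightedKL σ2 w (μ' - l)) + √(weightedKL σ2 w (μ - μ')) :=
        sqrt_weightedKL_add_le hw.1 _ _
    _ ≤ √(weightedKL σ2 w (μ' - l)) + ‖μ - μ'‖ / √(2 * σ2) := by
        gcongr
        exact sqrt_weightedKL_le hσ hw _

lemma sqrt_infAltKL_le_of_mem_alt (hσ : 0 ≤ σ2) (hw : w ∈ stdSimplex ℝ (Fin K))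
    {μ μ' : Fin K → ℝ} (hμ' : μ' ∈ Alt μ) :
    √(infAltKL σ2 Alt μ w) ≤ ‖μ - μ'‖ / √(2 * σ2) :=
  (Real.sqrt_le_sqrt (infAltKL_le_weightedKL hσ hw hμ')).trans (sqrt_weightedKL_le hσ hw _)

lemma sqrt_Tinv_le_sqrt_Tinv_add (hσ : 0 ≤ σ2)
    (hAlt : ∀ μ μ' : Fin K → ℝ, Alt μ = Alt μ' ∨ μ' ∈ Alt μ)
    {μ μ' : Fin K → ℝ} (hne : (Alt μ').Nonempty) :
    √(Tinv K σ2 Alt μ) ≤ √(Tinv K σ2 Alt μ') + ‖μ - μ'‖ / √(2 * σ2) := by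
  rw [Real.sqrt_le_left (by positivity), Tinv_eq_sSup_infAltKL (ν := μ)]
  refine Real.sSup_le ?_ (sq_nonneg _)
  rintro _ ⟨w, hw, rfl⟩
  rw [← Real.sqrt_le_left (by positivity)]
  rcases hAlt μ μ' with hAlt_eq | hμ'
  · refine (sqrt_infAltKL_le_of_alt_eq hσ hw hAlt_eq hne).trans ?_
    gcongr
    exact infAltKL_le_Tinv hσ hne hw
  · exact (sqrt_infAltKL_le_of_mem_alt hσ hw hμ').trans (le_add_of_nonneg_left (Real.sqrt_nonneg _))

end Tinv

lemma log_sub_log_le_of_sqrt_le_sqrt_add {a b d : ℝ} (ha : 0 < a) (hb : 0 < b)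
    (h : √a ≤ √b + d) : Real.log a - Real.log b ≤ 2 * d / √b := by
  have hsa : 0 < √a := Real.sqrt_pos.2 ha
  have hsb : 0 < √b := Real.sqrt_pos.2 hb
  calc Real.log a - Real.log b = 2 * Real.log (√a / √b) := by
        rw [Real.log_div hsa.ne' hsb.ne', Real.log_sqrt ha.le, Real.log_sqrt hb.le]
        ring
    _ ≤ 2 * (√a / √b - 1) := by
        gcongr
        exact Real.log_le_sub_one_of_pos (by positivity)
    _ ≤ 2 * d / √b := by
        rw [div_sub_one hsb.ne', mul_div_assoc]
        gcongr
        linarith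

lemma two_mul_div_sqrt_eq_sqrt_mul {σ2 b x : ℝ} (hσ : 0 < σ2) (hb : 0 < b) :
    2 * (x / √(2 * σ2)) / √b = √(2 * b⁻¹ / σ2) * x := by
  rw [Real.sqrt_div' _ hσ.le, Real.sqrt_mul zero_le_two, Real.sqrt_mul zero_le_two, Real.sqrt_inv]
  have : 0 < √σ2 := Real.sqrt_pos.2 hσ
  have : 0 < √b := Real.sqrt_pos.2 hb
  field_simp
  rw [Real.sq_sqrt zero_le_two]
  ring

theorem stmt_7_general (K : ℕ) (σ2 : ℝ) (hσ2 : 0 < σ2)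
    (Alt : (Fin K → ℝ) → Set (Fin K → ℝ))
    (hAlt : ∀ μ μ' : Fin K → ℝ, Alt μ = Alt μ' ∨ μ' ∈ Alt μ)
    (μ μ' : Fin K → ℝ) (h2 : (Alt μ').Nonempty)
    (hpos : 0 < Tinv K σ2 Alt μ) (hpos' : 0 < Tinv K σ2 Alt μ') :
    Real.log (Tinv K σ2 Alt μ')⁻¹ - Real.log (Tinv K σ2 Alt μ)⁻¹ ≤
      Real.sqrt (2 * (Tinv K σ2 Alt μ')⁻¹ / σ2) * ‖μ - μ'‖ := by
  rw [Real.log_inv, Real.log_inv, neg_sub_neg, ← two_mul_div_sqrt_eq_sqrt_mul hσ2 hpos']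
  exact log_sub_log_le_of_sqrt_le_sqrt_add hpos hpos'
    (sqrt_Tinv_le_sqrt_Tinv_add hσ2.le hAlt h2)

/-- For `T*(μ), T*(μ')` finite positive,
`ln T*(μ') - ln T*(μ) ≤ √(2 T*(μ')/σ²) ‖μ - μ'‖_∞`. -/
theorem stmt_7 (K : ℕ) (σ2 : ℝ) (hσ2 : 0 < σ2)
    (Alt : (Fin K → ℝ) → Set (Fin K → ℝ))
    (hAlt : ∀ μ μ' : Fin K → ℝ, Alt μ = Alt μ' ∨ μ' ∈ Alt μ)
    (μ μ' : Fin K → ℝ) (h1 : (Alt μ).Nonempty) (h2 : (Alt μ').Nonempty)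
    (hpos : 0 < Tinv K σ2 Alt μ) (hpos' : 0 < Tinv K σ2 Alt μ') :
    Real.log (Tinv K σ2 Alt μ')⁻¹ - Real.log (Tinv K σ2 Alt μ)⁻¹ ≤
      Real.sqrt (2 * (Tinv K σ2 Alt μ')⁻¹ / σ2) * ‖μ - μ'‖ :=
  stmt_7_general K σ2 hσ2 Alt hAlt μ μ' h2 hpos hpos'
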